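/- Hardy's classical impossibility: for any probability mass function p on assignments (x_A, z_A, x_B, z_B) ∈ {-1,1}⁴, if p assigns probability 0 to all tuples with (x_A=-1, z_B=+1), probability 0 to all tuples with (z_A=+1, x_B=-1), and probability 0 to all tuples with (z_A=-1, z_B=-1), then it assigns probability 0 to all tuples with (x_A=-1, x_B=-1). -/
import Mathlib

open Finset

/-- Hardy's classical impossibility: components of `v` are
`(x_A, z_A, x_B, z_B)`. If the three Hardy constraints hold with probability
zero, then the event `x_A = -1 ∧ x_B = -1` also has probability zero, tuple by
tuple. -/
theorem hardy_classical_impossibility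
    (p : (Fin 4 → ({-1, 1} : Finset ℤ)) → ℝ)
    (hp : ∀ v, 0 ≤ p v) (hsum : ∑ v, p v = 1)
    (h1 : ∀ v, (v 0 : ℤ) = -1 → (v 3 : ℤ) = 1 → p v = 0)
    (h2 : ∀ v, (v 1 : ℤ) = 1 → (v 2 : ℤ) = -1 → p v = 0)
    (h3 : ∀ v, (v 1 : ℤ) = -1 → (v 3 : ℤ) = -1 → p v = 0) :
    ∀ v, (v 0 : ℤ) = -1 → (v 2 : ℤ) = -1 → p v = 0 := by
  intro v h0 h2'
  have m1 : (v 1 : ℤ) = -1 ∨ (v 1 : ℤ) = 1 := by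
    rcases Finset.mem_insert.mp (v 1).2 with h | h
    · exact Or.inl h
    · exact Or.inr (Finset.mem_singleton.mp h)
  have m3 : (v 3 : ℤ) = -1 ∨ (v 3 : ℤ) = 1 := by
    rcases Finset.mem_insert.mp (v 3).2 with h | h
    · exact Or.inl h
    · exact Or.inr (Finset.mem_singleton.mp h)
  rcases m1 with hm1 | hm1
  · rcases m3 with hm3 | hm3
    · exact h3 v hm1 hm3
    · exact h1 v h0 hm3
  · exact h2 v hm1 h2'
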